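/- In the symmetric group S_n with simple transpositions s_1, ..., s_{n-1}, any two Coxeter elements (products of all simple reflections, each appearing exactly once, in some order) are conjugate by cyclic shifts. -/

import Mathlib

/-!
A Coxeter word (each `s_i` exactly once) is reduced. Under the permutation representation
`s_i ↦ (i, i + 1)` of `W` on `Fin (n + 1)`, only `s_k` can move an element of `{0, …, k}` out of
that set, and the permutation of a Coxeter word does so for every `k`; hence every reduced word for
it contains all `n` letters. For a Coxeter word `u ++ v`, lengths therefore add up in both
`π u * π v` and `π v * π u`, so rotating the word is a cyclic shift.

Call `y` inverted in `l` when `s_y` precedes `s_{y - 1}`, and give `l` the weight `∑ y` over its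
inverted letters. If `y` is the smallest inverted letter, then `s_{k - 1}` and `s_{k + 1}` both
precede `s_k`, where `k = y - 1`; so `s_k` commutes with everything after it, and moving it to the
end and rotating it to the front trades the inverted letter `k + 1` for (at most) the inverted
letter `k`, lowering the weight by one. A Coxeter word without inverted letters is
`[0, 1, …, n - 1]`, so every Coxeter element is conjugate to `s_0 s_1 ⋯ s_{n-1}` by cyclic shifts.
-/

open List

namespace CoxeterSystem

variable {B W : Type*} [Group W] {M : CoxeterMatrix B} (cs : CoxeterSystem M W)

def IsCyclicShift (u v : W) : Prop :=
  ∃ x y : W, u = x * y ∧ v = y * x ∧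
    cs.length u = cs.length x + cs.length y ∧ cs.length v = cs.length x + cs.length y

theorem IsCyclicShift.symm {cs : CoxeterSystem M W} {u v : W} (h : cs.IsCyclicShift u v) :
    cs.IsCyclicShift v u := by
  obtain ⟨x, y, rfl, rfl, hu, hv⟩ := h
  exact ⟨y, x, rfl, rfl, by rw [hv, add_comm], by rw [hu, add_comm]⟩

instance : Std.Symm cs.IsCyclicShift := ⟨fun _ _ h => h.symm⟩

theorem isCyclicShift_wordProd_append {ω ω' : List B} (h : cs.IsReduced (ω ++ ω'))
    (h' : cs.IsReduced (ω' ++ ω)) :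
    cs.IsCyclicShift (cs.wordProd (ω ++ ω')) (cs.wordProd (ω' ++ ω)) := by
  have hx := cs.length_wordProd_le ω
  have hy := cs.length_wordProd_le ω'
  have hxy := cs.length_mul_le (cs.wordProd ω) (cs.wordProd ω')
  rw [← cs.wordProd_append, h.eq, length_append] at hxy
  refine ⟨cs.wordProd ω, cs.wordProd ω', cs.wordProd_append _ _, cs.wordProd_append _ _, ?_, ?_⟩
  · rw [h.eq, length_append]; omega
  · rw [h'.eq, length_append]; omega

theorem simple_mul_simple_comm_of_eq_two {i j : B} (h : M i j = 2) :
    cs.simple i * cs.simple j = cs.simple j * cs.simple i := by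
  have hsq := cs.simple_mul_simple_pow i j
  rw [h, pow_two] at hsq
  rw [eq_inv_of_mul_eq_one_left hsq, mul_inv_rev, inv_simple, inv_simple]

theorem wordProd_cons_eq_wordProd_concat {i : B} {ω : List B} (h : ∀ j ∈ ω, M i j = 2) :
    cs.wordProd (i :: ω) = cs.wordProd (ω ++ [i]) := by
  induction ω with
  | nil => rfl
  | cons j ω ih =>
    rw [wordProd_cons, wordProd_cons, ← mul_assoc,
      cs.simple_mul_simple_comm_of_eq_two (h j mem_cons_self), mul_assoc, ← wordProd_cons,
      ih fun j' hj' => h j' (mem_cons_of_mem j hj'), cons_append, wordProd_cons]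

theorem isCyclicShift_wordProd_append_cons {a b : List B} {k : B} (hb : ∀ j ∈ b, M k j = 2)
    (h : cs.IsReduced (a ++ k :: b)) (h' : cs.IsReduced (k :: (a ++ b))) :
    cs.IsCyclicShift (cs.wordProd (a ++ k :: b)) (cs.wordProd (k :: (a ++ b))) := by
  have hprod : cs.wordProd (a ++ k :: b) = cs.wordProd (a ++ b ++ [k]) := by
    rw [wordProd_append, cs.wordProd_cons_eq_wordProd_concat hb, ← wordProd_append, append_assoc]
  rw [hprod]
  refine cs.isCyclicShift_wordProd_append ?_ h'
  rw [IsReduced, ← hprod, h.eq]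
  simp

end CoxeterSystem

namespace List

variable {α : Type*} {a b : List α}

theorem pair_sublist_append_cons_iff_of_ne [DecidableEq α] {x y k : α} (hx : x ≠ k) (hy : y ≠ k)
    (hka : k ∉ a) : [x, y] <+ a ++ k :: b ↔ [x, y] <+ a ++ b := by
  refine ⟨fun h => ?_, fun h => h.trans ((sublist_cons_self k b).append_left a)⟩
  simpa [erase_of_not_mem, hx.symm, hy.symm, erase_append_right _ hka] using h.erase k

theorem pair_sublist_append_cons_iff {x k : α} (hx : x ≠ k) (hka : k ∉ a) (hkb : k ∉ b) :
    [x, k] <+ a ++ k :: b ↔ x ∈ a := by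
  refine ⟨fun h => ?_, fun h => (singleton_sublist.mpr h).append (by simp)⟩
  obtain ⟨l₁, l₂, h, h₁, h₂⟩ := sublist_append_iff.mp h
  rcases l₁ with _ | ⟨z, _ | ⟨z', l₁⟩⟩
  · subst h
    simp only [sublist_cons_iff, cons.injEq, hx, false_and, exists_false, or_false] at h₂
    exact absurd (h₂.subset (by simp)) hkb
  · simp_all
  · simp only [cons_append, cons.injEq] at h
    obtain ⟨rfl, rfl, -⟩ := h
    exact absurd (h₁.subset (by simp)) hka

variable {n : ℕ}

def IsInvertedAt (l : List (Fin n)) (y : Fin n) : Prop :=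
  ∃ x : Fin n, (x : ℕ) + 1 = y ∧ [y, x] <+ l

instance (l : List (Fin n)) : DecidablePred l.IsInvertedAt :=
  fun _ => inferInstanceAs (Decidable (∃ _, _))

def invertedWeight (l : List (Fin n)) : ℕ :=
  ∑ y, if l.IsInvertedAt y then (y : ℕ) else 0

theorem eq_finRange_of_forall_not_isInvertedAt {l : List (Fin n)} (hl : l ~ finRange n)
    (h : ∀ y, ¬ l.IsInvertedAt y) : l = finRange n := by
  refine hl.eq_of_pairwise' (pairwise_of_forall_sublist fun {c d} hcd => ?_)
    (pairwise_lt_finRange n)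
  have hnd := hl.nodup_iff.mpr (nodup_finRange n)
  obtain ⟨r₁, r₂, rfl, hc, hd⟩ := cons_sublist_iff.mp hcd
  rw [singleton_sublist] at hd
  have hdisj := (nodup_append.mp hnd).2.2
  by_contra! hdc
  obtain ⟨y, ⟨hdy, hy⟩, hmin⟩ := wellFounded_lt.has_min {y | d < y ∧ y ∈ r₁}
    ⟨c, hdc.lt_of_ne (hdisj c hc d hd).symm, hc⟩
  rw [Fin.lt_def] at hdy
  -- the least `y > d` lying in `r₁` has its predecessor in `r₂`
  obtain ⟨x, hxy⟩ : ∃ x : Fin n, (x : ℕ) + 1 = y := ⟨⟨y - 1, by omega⟩, by simp; omega⟩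
  have hxr₂ : x ∈ r₂ := by
    refine (mem_append.mp (hl.mem_iff.mpr (mem_finRange x))).resolve_left fun hx => ?_
    rcases (show d ≤ x from Fin.le_def.mpr (by omega)).eq_or_lt with rfl | hdx
    · exact hdisj _ hx _ hd rfl
    · exact hmin x ⟨hdx, hx⟩ (Fin.lt_def.mpr (by omega))
  exact h y ⟨x, hxy, (singleton_sublist.mpr hy).append (singleton_sublist.mpr hxr₂)⟩

theorem isInvertedAt_cons_append_iff {a b : List (Fin n)} {k y : Fin n} (hka : k ∉ a)
    (hyk : y ≠ k) (hky : (k : ℕ) + 1 ≠ y) :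
    (k :: (a ++ b)).IsInvertedAt y ↔ (a ++ k :: b).IsInvertedAt y := by
  refine exists_congr fun x => and_congr_right fun hxy => ?_
  have hxk : x ≠ k := fun h => hky (by rw [← h, hxy])
  exact (pair_sublist_append_cons_iff_of_ne (a := []) hyk hxk not_mem_nil).trans
    (pair_sublist_append_cons_iff_of_ne hyk hxk hka).symm

theorem invertedWeight_cons_append_lt {a b : List (Fin n)} {k i : Fin n}
    (hl : a ++ k :: b ~ finRange n) (hki : (k : ℕ) + 1 = i) (hik : [i, k] <+ a ++ k :: b)
    (hk : ¬ (a ++ k :: b).IsInvertedAt k) :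
    (k :: (a ++ b)).invertedWeight < (a ++ k :: b).invertedWeight := by
  have hkab : k ∉ a ++ b :=
    (nodup_cons.mp (nodup_middle.mp (hl.nodup_iff.mpr (nodup_finRange n)))).1
  have hik' : i ≠ k := fun h => by simp [h] at hki
  have key : ∀ y : Fin n,
      ((if (k :: (a ++ b)).IsInvertedAt y then (y : ℕ) else 0) + if y = i then (y : ℕ) else 0) =
        (if (a ++ k :: b).IsInvertedAt y then (y : ℕ) else 0) + if y = k then (y : ℕ) else 0 := by
    intro y
    by_cases hyi : y = i
    · subst hyi
      have : ¬ (k :: (a ++ b)).IsInvertedAt y := by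
        rintro ⟨x, hxy, hyx⟩
        obtain rfl : x = k := Fin.ext (by omega)
        simpa using (pair_sublist_append_cons_iff (a := []) hik' not_mem_nil hkab).mp hyx
      have hy : (a ++ k :: b).IsInvertedAt y := ⟨k, hki, hik⟩
      rw [if_neg this, if_pos hy, if_pos rfl, if_neg hik', zero_add, add_zero]
    by_cases hyk : y = k
    · subst hyk
      rw [if_neg hk, if_pos rfl, if_neg hyi, add_zero, zero_add]
      rcases Nat.eq_zero_or_pos (y : ℕ) with hy0 | hy0
      · simp [hy0]
      obtain ⟨x, hxy⟩ : ∃ x : Fin n, (x : ℕ) + 1 = y := ⟨⟨y - 1, by omega⟩, by simp; omega⟩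
      have hxy' : x ≠ y := fun h => by simp [h] at hxy
      have hx : x ∈ a ++ b := by simpa [hxy'] using hl.mem_iff.mpr (mem_finRange x)
      have hy : (y :: (a ++ b)).IsInvertedAt y := ⟨x, hxy, by simpa using hx⟩
      rw [if_pos hy]
    · have hky : (k : ℕ) + 1 ≠ y := fun h => hyi (Fin.ext (h.symm.trans hki))
      rw [if_neg hyi, if_neg hyk,
        if_congr (isInvertedAt_cons_append_iff (mt (mem_append_left b) hkab) hyk hky) rfl rfl]
  have hsum := Finset.sum_congr rfl fun y (_ : y ∈ Finset.univ) => key y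
  simp only [Finset.sum_add_distrib, Fintype.sum_ite_eq'] at hsum
  unfold invertedWeight
  omega

end List

namespace CoxeterMatrix

variable {n : ℕ}

theorem A_eq_two {i j : Fin n} (hij : i ≠ j) (h₁ : (j : ℕ) + 1 ≠ i) (h₂ : (i : ℕ) + 1 ≠ j) :
    CoxeterMatrix.A n i j = 2 := by
  simp [CoxeterMatrix.A, hij, h₁, h₂]

end CoxeterMatrix

namespace Equiv.Perm

variable {n : ℕ}

def adjSwap (i : Fin n) : Perm (Fin (n + 1)) := swap i.castSucc i.succ

theorem swap_mul_swap_pow_three {α : Type*} [Fintype α] [DecidableEq α] {a b c : α} (hab : a ≠ b)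
    (hac : a ≠ c) (hbc : b ≠ c) : (swap a b * swap a c) ^ 3 = 1 := by
  have h3 := (isThreeCycle_swap_mul_swap_same hab hac hbc).orderOf
  rw [← h3]
  exact pow_orderOf_eq_one _

theorem isLiftable_adjSwap : (CoxeterMatrix.A n).IsLiftable (adjSwap (n := n)) := by
  intro i j
  by_cases hij : i = j
  · subst hij
    simp [CoxeterMatrix.A, adjSwap]
  by_cases hji : (j : ℕ) + 1 = i
  · have : j.succ = i.castSucc := Fin.ext (by simp [hji])
    rw [show CoxeterMatrix.A n i j = 3 by simp [CoxeterMatrix.A, hij, hji], adjSwap, adjSwap,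
      this, swap_comm j.castSucc]
    exact swap_mul_swap_pow_three (by simp [Fin.ext_iff]) (by simp [Fin.ext_iff]; omega)
      (by simp [Fin.ext_iff]; omega)
  by_cases hij' : (i : ℕ) + 1 = j
  · have : i.succ = j.castSucc := Fin.ext (by simp [hij'])
    rw [show CoxeterMatrix.A n i j = 3 by simp [CoxeterMatrix.A, hij, hij'], adjSwap, adjSwap,
      swap_comm i.castSucc, this]
    exact swap_mul_swap_pow_three (by simp [Fin.ext_iff]; omega) (by simp [Fin.ext_iff])
      (by simp [Fin.ext_iff]; omega)
  rw [CoxeterMatrix.A_eq_two hij hji hij', adjSwap, adjSwap,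
    ((disjoint_swap_swap (by simp [Fin.ext_iff]; omega)).commute).mul_pow, sq, sq, swap_mul_self,
    swap_mul_self, mul_one]

theorem adjSwap_apply_le_iff {j k : Fin n} (h : j ≠ k) (a : Fin (n + 1)) :
    ((adjSwap j a : Fin (n + 1)) : ℕ) ≤ k ↔ (a : ℕ) ≤ k := by
  rw [Fin.ne_iff_vne] at h
  rw [adjSwap, swap_apply_def]
  split_ifs with h₁ h₂
  · subst h₁; simp; omega
  · subst h₂; simp; omega
  · rfl

end Equiv.Perm

namespace CoxeterSystem

variable {n : ℕ} {W : Type*} [Group W] (cs : CoxeterSystem (CoxeterMatrix.A n) W)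

def permRep : W →* Equiv.Perm (Fin (n + 1)) := cs.lift ⟨_, Equiv.Perm.isLiftable_adjSwap⟩

theorem permRep_simple (i : Fin n) : cs.permRep (cs.simple i) = Equiv.Perm.adjSwap i :=
  cs.lift_apply_simple _ i

theorem permRep_wordProd_apply_le_iff {ω : List (Fin n)} {k : Fin n} (hk : k ∉ ω)
    (a : Fin (n + 1)) : ((cs.permRep (cs.wordProd ω) a : Fin (n + 1)) : ℕ) ≤ k ↔ (a : ℕ) ≤ k := by
  induction ω generalizing a with
  | nil => simp
  | cons j ω ih =>
    rw [mem_cons, not_or] at hk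
    rw [wordProd_cons, map_mul, permRep_simple, Equiv.Perm.mul_apply]
    exact (Equiv.Perm.adjSwap_apply_le_iff (Ne.symm hk.1) _).trans (ih hk.2 a)

theorem mem_of_wordProd_eq_wordProd_of_perm_finRange {l ω : List (Fin n)}
    (hl : l ~ finRange n) (h : cs.wordProd ω = cs.wordProd l) (k : Fin n) : k ∈ ω := by
  by_contra hkω
  obtain ⟨a, b, rfl⟩ := append_of_mem (hl.mem_iff.mpr (mem_finRange k))
  have hnd := hl.nodup_iff.mpr (nodup_finRange n)
  have hkab : k ∉ a ++ b := (nodup_cons.mp (nodup_middle.mp hnd)).1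
  rw [mem_append, not_or] at hkab
  set x := (cs.permRep (cs.wordProd b)).symm k.castSucc
  have hbx : cs.permRep (cs.wordProd b) x = k.castSucc := Equiv.apply_symm_apply _ _
  have hx : (x : ℕ) ≤ k := (cs.permRep_wordProd_apply_le_iff hkab.2 x).mp (by simp [hbx])
  rw [← cs.permRep_wordProd_apply_le_iff hkω x, h, wordProd_append, wordProd_cons, map_mul,
    map_mul, permRep_simple, Equiv.Perm.mul_apply, Equiv.Perm.mul_apply, hbx,
    Equiv.Perm.adjSwap, Equiv.swap_apply_left, cs.permRep_wordProd_apply_le_iff hkab.1] at hx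
  simp at hx

theorem isReduced_of_perm_finRange {l : List (Fin n)} (hl : l ~ finRange n) : cs.IsReduced l := by
  obtain ⟨ω, hω, hωl⟩ := cs.exists_isReduced (cs.wordProd l)
  have hle := cs.length_wordProd_le l
  rw [hl.length_eq, length_finRange, hωl, hω.eq] at hle
  have hlen : n ≤ ω.length :=
    calc n = (Finset.univ : Finset (Fin n)).card := (Finset.card_fin n).symm
      _ ≤ ω.toFinset.card := Finset.card_le_card fun k _ =>
          mem_toFinset.mpr (cs.mem_of_wordProd_eq_wordProd_of_perm_finRange hl hωl.symm k)
      _ ≤ ω.length := toFinset_card_le ω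
  rw [IsReduced, hl.length_eq, length_finRange, hωl, hω.eq]
  omega

theorem exists_isCyclicShift_of_isInvertedAt {l : List (Fin n)} (hl : l ~ finRange n)
    (h : ∃ y, l.IsInvertedAt y) :
    ∃ l', l' ~ finRange n ∧ l'.invertedWeight < l.invertedWeight ∧
      cs.IsCyclicShift (cs.wordProd l) (cs.wordProd l') := by
  obtain ⟨i, ⟨k, hki, hik⟩, hmin⟩ := wellFounded_lt.has_min {y | l.IsInvertedAt y} h
  obtain ⟨a, b, rfl⟩ := append_of_mem (hik.subset (by simp) : k ∈ l)
  have hk : ¬ (a ++ k :: b).IsInvertedAt k := fun hk => hmin k hk (Fin.lt_def.mpr (by omega))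
  have hl' : k :: (a ++ b) ~ finRange n := perm_middle.symm.trans hl
  refine ⟨k :: (a ++ b), hl', invertedWeight_cons_append_lt hl hki hik hk,
    cs.isCyclicShift_wordProd_append_cons (fun j hj => ?_) (cs.isReduced_of_perm_finRange hl)
      (cs.isReduced_of_perm_finRange hl')⟩
  obtain ⟨hkab, hab⟩ := nodup_cons.mp (nodup_middle.mp (hl.nodup_iff.mpr (nodup_finRange n)))
  have hkj : [k, j] <+ a ++ k :: b :=
    (by simpa using hj : [k, j] <+ k :: b).trans (sublist_append_right a _)
  have hkj' : k ≠ j := fun h => hkab (h ▸ mem_append_right a hj)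
  refine CoxeterMatrix.A_eq_two hkj' (fun hjk => hk ⟨j, hjk, hkj⟩) fun hkj'' => ?_
  obtain rfl : i = j := Fin.ext (by omega)
  have hia := (pair_sublist_append_cons_iff hkj'.symm (mt (mem_append_left b) hkab)
    (mt (mem_append_right a) hkab)).mp hik
  exact (nodup_append.mp hab).2.2 i hia i hj rfl

theorem reflTransGen_isCyclicShift_wordProd_finRange {l : List (Fin n)} (hl : l ~ finRange n) :
    Relation.ReflTransGen cs.IsCyclicShift (cs.wordProd l) (cs.wordProd (finRange n)) := by
  induction hμ : l.invertedWeight using Nat.strong_induction_on generalizing l with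
  | _ μ ih =>
    by_cases h : ∃ y, l.IsInvertedAt y
    · obtain ⟨l', hl', hlt, hshift⟩ := cs.exists_isCyclicShift_of_isInvertedAt hl h
      exact .head hshift (ih _ (hμ ▸ hlt) hl' rfl)
    · rw [eq_finRange_of_forall_not_isInvertedAt hl (not_exists.mp h)]

end CoxeterSystem

/-- In the symmetric group `Sₙ` (presented as the Coxeter group of type `A`), any two Coxeter
elements (products of all the simple reflections, each appearing exactly once, in some order)
are conjugate by cyclic shifts. -/
theorem stmt_2 {n : ℕ} {W : Type*} [Group W]
    (cs : CoxeterSystem (CoxeterMatrix.Aₙ n) W) (w w' : W)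
    (hw : ∃ l : List (Fin n), l.Nodup ∧ (∀ i, i ∈ l) ∧ w = cs.wordProd l)
    (hw' : ∃ l : List (Fin n), l.Nodup ∧ (∀ i, i ∈ l) ∧ w' = cs.wordProd l) :
    Relation.ReflTransGen
      (fun u v => ∃ x y : W, u = x * y ∧ v = y * x ∧
        cs.length u = cs.length x + cs.length y ∧
        cs.length v = cs.length x + cs.length y) w w' := by
  have hperm {l : List (Fin n)} (hnd : l.Nodup) (hl : ∀ i, i ∈ l) : l ~ finRange n :=
    (perm_ext_iff_of_nodup hnd (nodup_finRange n)).mpr fun i => by simp [hl i]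
  obtain ⟨l, hnd, hl, rfl⟩ := hw
  obtain ⟨l', hnd', hl', rfl⟩ := hw'
  exact (cs.reflTransGen_isCyclicShift_wordProd_finRange (hperm hnd hl)).trans
    (Std.Symm.symm (r := Relation.ReflTransGen cs.IsCyclicShift) _ _
      (cs.reflTransGen_isCyclicShift_wordProd_finRange (hperm hnd' hl')))
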